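/- arXiv:2212.05522 — 2 statements merged into one kernel-verified Lean document; each statement's English description precedes it below -/
import Mathlib

section
/- Let 𝓕 be an ω-closed family of nonempty inductive subsets of ω. Then every Hausdorff shift-continuous topology τ on the semigroup B_ω^𝓕 is the discrete topology. -/
/-- For `n : ℕ` and `F ⊆ ω`, `wShift n F` is the set `(−n)+F = {x ∈ ω : x + n ∈ F}`. -/
def wShift (n : ℕ) (F : Set ℕ) : Set ℕ := {x | x + n ∈ F}

/-- A family `𝓕` of subsets of `ω` is ω-closed if `F₁ ∩ ((−n)+F₂) ∈ 𝓕`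
for all `n ∈ ω` and `F₁, F₂ ∈ 𝓕`. -/
def OmegaClosed (𝓕 : Set (Set ℕ)) : Prop :=
  ∀ n : ℕ, ∀ F₁ ∈ 𝓕, ∀ F₂ ∈ 𝓕, F₁ ∩ wShift n F₂ ∈ 𝓕

/-- A subset `F ⊆ ω` is inductive if `n ∈ F` implies `n+1 ∈ F`. -/
def InductiveSet (F : Set ℕ) : Prop := ∀ n : ℕ, n ∈ F → n + 1 ∈ F

/-- The underlying set `ω × ω × 𝓕` of the semigroup `B_ω^𝓕`. -/
abbrev BF (𝓕 : Set (Set ℕ)) : Type := ℕ × ℕ × {F : Set ℕ // F ∈ 𝓕}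

/-- The multiplication of the semigroup `B_ω^𝓕`:
`(i₁,j₁,F₁)·(i₂,j₂,F₂) = (i₁−j₁+i₂, j₂, ((j₁−i₂)+F₁) ∩ F₂)` if `j₁ ≤ i₂`, and
`(i₁, j₁−i₂+j₂, F₁ ∩ ((i₂−j₁)+F₂))` if `j₁ ≥ i₂`. -/
def BFmul {𝓕 : Set (Set ℕ)} (h : OmegaClosed 𝓕) (a b : BF 𝓕) : BF 𝓕 :=
  if a.2.1 ≤ b.1 then
    (a.1 + (b.1 - a.2.1), b.2.1,
      ⟨wShift (b.1 - a.2.1) a.2.2.1 ∩ b.2.2.1, by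
        rw [Set.inter_comm]; exact h _ _ b.2.2.2 _ a.2.2.2⟩)
  else
    (a.1, b.2.1 + (a.2.1 - b.1),
      ⟨a.2.2.1 ∩ wShift (a.2.1 - b.1) b.2.2.1, h _ _ a.2.2.2 _ b.2.2.2⟩)

/-!
Every `F ∈ 𝓕` is the ray `[min F, ∞)`, so an element `(i, j, F)` is determined by the triple
`(i, j, min F)`, and products are computed by explicit arithmetic on these triples.
For a point `p = (i, j, F)`, each of the conditions `x.1 ≤ i`, `x.2.1 ≤ j` and `min x.2.2 < C`
(for a suitable `C`) is forced on a neighbourhood of `p`: two translations that differ at `p`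
agree on every `x` violating it, and in a Hausdorff space the set where two continuous maps differ
is open. Hence `p` has a finite neighbourhood, so it is isolated.
-/

open Topology

lemma InductiveSet.eq_Ici_sInf {F : Set ℕ} (hF : InductiveSet F) (hne : F.Nonempty) :
    F = Set.Ici (sInf F) := by
  ext n
  refine ⟨fun hn => Nat.sInf_le hn, fun hn => ?_⟩
  induction n, hn using Nat.le_induction with
  | base => exact Nat.sInf_mem hne
  | succ n _ ih => exact hF n ih

lemma wShift_Ici (n a : ℕ) : wShift n (Set.Ici a) = Set.Ici (a - n) := by
  ext x
  simp only [wShift, Set.mem_ofPred_eq, Set.mem_Ici]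
  omega

lemma mem_nhds_of_ne_of_eqOn_compl {X Y : Type*} [TopologicalSpace X] [TopologicalSpace Y]
    [T2Space Y] {f g : X → Y} (hf : Continuous f) (hg : Continuous g) {p : X} {s : Set X}
    (hp : f p ≠ g p) (hs : Set.EqOn f g sᶜ) : s ∈ 𝓝 p :=
  Filter.mem_of_superset ((isOpen_ne_fun hf hg).mem_nhds hp) fun x hx => not_imp_comm.mp (@hs x) hx

lemma exists_mem_sInf_le_sInf {𝓕 : Set (Set ℕ)} (h𝓕 : 𝓕.Nonempty) :
    ∃ F₀ ∈ 𝓕, ∀ F ∈ 𝓕, sInf F₀ ≤ sInf F := by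
  obtain ⟨F₀, hF₀, hmin⟩ := Nat.sInf_mem (h𝓕.image sInf)
  exact ⟨F₀, hF₀, fun F hF => hmin ▸ Nat.sInf_le ⟨F, hF, rfl⟩⟩

namespace BF

variable {𝓕 : Set (Set ℕ)}

noncomputable def coords (x : BF 𝓕) : ℕ × ℕ × ℕ := (x.1, x.2.1, sInf x.2.2.1)

def coordsMul (a b : ℕ × ℕ × ℕ) : ℕ × ℕ × ℕ :=
  if a.2.1 ≤ b.1 then (a.1 + (b.1 - a.2.1), b.2.1, max (a.2.2 - (b.1 - a.2.1)) b.2.2)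
  else (a.1, b.2.1 + (a.2.1 - b.1), max a.2.2 (b.2.2 - (a.2.1 - b.1)))

lemma coords_injective (hne : ∀ F ∈ 𝓕, F.Nonempty) (hind : ∀ F ∈ 𝓕, InductiveSet F) :
    Function.Injective (coords (𝓕 := 𝓕)) := by
  rintro ⟨i, j, F, hF⟩ ⟨i', j', G, hG⟩ h
  simp only [coords, Prod.mk.injEq] at h
  obtain ⟨rfl, rfl, hFG⟩ := h
  have : F = G := by
    rw [(hind F hF).eq_Ici_sInf (hne F hF), (hind G hG).eq_Ici_sInf (hne G hG), hFG]
  subst this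
  rfl

lemma coords_BFmul (hcl : OmegaClosed 𝓕) (hne : ∀ F ∈ 𝓕, F.Nonempty)
    (hind : ∀ F ∈ 𝓕, InductiveSet F) (a b : BF 𝓕) :
    coords (BFmul hcl a b) = coordsMul (coords a) (coords b) := by
  obtain ⟨i, j, F, hF⟩ := a
  obtain ⟨k, l, G, hG⟩ := b
  obtain ⟨f, rfl⟩ : ∃ f, F = Set.Ici f := ⟨_, (hind F hF).eq_Ici_sInf (hne F hF)⟩
  obtain ⟨g, rfl⟩ : ∃ g, G = Set.Ici g := ⟨_, (hind G hG).eq_Ici_sInf (hne G hG)⟩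
  unfold BFmul coordsMul coords
  split_ifs <;> simp [wShift_Ici, Set.Ici_inter_Ici]

lemma BFmul_eq_iff (hcl : OmegaClosed 𝓕) (hne : ∀ F ∈ 𝓕, F.Nonempty)
    (hind : ∀ F ∈ 𝓕, InductiveSet F) (a b c d : BF 𝓕) :
    BFmul hcl a b = BFmul hcl c d ↔
      coordsMul (coords a) (coords b) = coordsMul (coords c) (coords d) := by
  rw [← coords_BFmul hcl hne hind, ← coords_BFmul hcl hne hind]
  exact (coords_injective hne hind).eq_iff.symm

lemma finite_setOf_le_le_lt (hne : ∀ F ∈ 𝓕, F.Nonempty) (hind : ∀ F ∈ 𝓕, InductiveSet F)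
    (a b C : ℕ) : {x : BF 𝓕 | x.1 ≤ a ∧ x.2.1 ≤ b ∧ sInf x.2.2.1 < C}.Finite :=
  ((Set.finite_Iic a).prod ((Set.finite_Iic b).prod (Set.finite_Iio C))).preimage
    (coords_injective hne hind).injOn

lemma coordsMul_left_eq_iff {i α k l f : ℕ} (hα : α ≤ f) :
    coordsMul (1, i + 1, α) (k, l, f) = coordsMul (0, i, α) (k, l, f) ↔ i < k := by
  simp only [coordsMul]
  split_ifs <;> simp only [Prod.mk.injEq, true_and] <;> omega

lemma coordsMul_right_eq_iff {j α k l f : ℕ} (hα : α ≤ f) :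
    coordsMul (k, l, f) (j + 1, 1, α) = coordsMul (k, l, f) (j, 0, α) ↔ j < l := by
  simp only [coordsMul]
  split_ifs <;> simp only [Prod.mk.injEq, true_and] <;> omega

lemma coordsMul_eq_of_le {t μ ν : ℕ} {y : ℕ × ℕ × ℕ} (hμν : μ ≤ ν) (hy : ν + t ≤ y.2.2) :
    coordsMul (0, t, μ) y = coordsMul (0, t, ν) y := by
  obtain ⟨k, l, f⟩ := y
  simp only [coordsMul] at hy ⊢
  split_ifs <;> simp only [Prod.mk.injEq, true_and] <;> omega

lemma coordsMul_ne_of_lt {t μ ν : ℕ} {y : ℕ × ℕ × ℕ} (hμν : μ < ν) (hy : y.2.2 + y.1 < t) :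
    coordsMul (0, t, μ) y ≠ coordsMul (0, t, ν) y := by
  obtain ⟨k, l, f⟩ := y
  simp only [coordsMul] at hy ⊢
  split_ifs <;> simp only [ne_eq, Prod.mk.injEq, true_and] <;> omega

variable [TopologicalSpace (BF 𝓕)] [T2Space (BF 𝓕)]

lemma fst_le_mem_nhds (hcl : OmegaClosed 𝓕) (hne : ∀ F ∈ 𝓕, F.Nonempty)
    (hind : ∀ F ∈ 𝓕, InductiveSet F) (hleft : ∀ a : BF 𝓕, Continuous (BFmul hcl a ·))
    (p : BF 𝓕) : {x : BF 𝓕 | x.1 ≤ p.1} ∈ 𝓝 p := by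
  obtain ⟨F₀, hF₀, hmin⟩ := exists_mem_sInf_le_sInf ⟨_, p.2.2.2⟩
  refine mem_nhds_of_ne_of_eqOn_compl (hleft (1, p.1 + 1, ⟨F₀, hF₀⟩))
    (hleft (0, p.1, ⟨F₀, hF₀⟩)) ?_ fun x hx => ?_
  · exact fun h => lt_irrefl _ <|
      (coordsMul_left_eq_iff (hmin _ p.2.2.2)).mp ((BFmul_eq_iff hcl hne hind _ _ _ _).mp h)
  · exact (BFmul_eq_iff hcl hne hind _ _ _ _).mpr
      ((coordsMul_left_eq_iff (hmin _ x.2.2.2)).mpr (not_le.mp hx))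

lemma snd_le_mem_nhds (hcl : OmegaClosed 𝓕) (hne : ∀ F ∈ 𝓕, F.Nonempty)
    (hind : ∀ F ∈ 𝓕, InductiveSet F) (hright : ∀ a : BF 𝓕, Continuous (BFmul hcl · a))
    (p : BF 𝓕) : {x : BF 𝓕 | x.2.1 ≤ p.2.1} ∈ 𝓝 p := by
  obtain ⟨F₀, hF₀, hmin⟩ := exists_mem_sInf_le_sInf ⟨_, p.2.2.2⟩
  refine mem_nhds_of_ne_of_eqOn_compl (hright (p.2.1 + 1, 1, ⟨F₀, hF₀⟩))
    (hright (p.2.1, 0, ⟨F₀, hF₀⟩)) ?_ fun x hx => ?_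
  · exact fun h => lt_irrefl _ <|
      (coordsMul_right_eq_iff (hmin _ p.2.2.2)).mp ((BFmul_eq_iff hcl hne hind _ _ _ _).mp h)
  · exact (BFmul_eq_iff hcl hne hind _ _ _ _).mpr
      ((coordsMul_right_eq_iff (hmin _ x.2.2.2)).mpr (not_le.mp hx))

lemma exists_sInf_lt_mem_nhds (hcl : OmegaClosed 𝓕) (hne : ∀ F ∈ 𝓕, F.Nonempty)
    (hind : ∀ F ∈ 𝓕, InductiveSet F) (hleft : ∀ a : BF 𝓕, Continuous (BFmul hcl a ·))
    (p : BF 𝓕) : ∃ C, {x : BF 𝓕 | sInf x.2.2.1 < C} ∈ 𝓝 p := by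
  by_cases hconst : ∀ F ∈ 𝓕, ∀ G ∈ 𝓕, sInf F ≤ sInf G
  · exact ⟨sInf p.2.2.1 + 1, Filter.univ_mem' fun x =>
      Nat.lt_succ_of_le (hconst _ x.2.2.2 _ p.2.2.2)⟩
  push Not at hconst
  obtain ⟨F, hF, G, hG, hlt⟩ := hconst
  set t := sInf p.2.2.1 + p.1 + 1
  refine ⟨sInf F + t, mem_nhds_of_ne_of_eqOn_compl (hleft (0, t, ⟨G, hG⟩))
    (hleft (0, t, ⟨F, hF⟩)) ?_ fun x hx => ?_⟩
  · rw [Ne, BFmul_eq_iff hcl hne hind]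
    exact coordsMul_ne_of_lt hlt (by simp only [coords]; omega)
  · rw [BFmul_eq_iff hcl hne hind]
    exact coordsMul_eq_of_le hlt.le (not_lt.mp hx)

end BF

/-- Theorem 2.3: every Hausdorff shift-continuous topology on `B_ω^𝓕`, for an
ω-closed family `𝓕` of nonempty inductive subsets of `ω`, is discrete. -/
theorem statement2 (𝓕 : Set (Set ℕ)) (hcl : OmegaClosed 𝓕)
    (hne : ∀ F ∈ 𝓕, F.Nonempty) (hind : ∀ F ∈ 𝓕, InductiveSet F)
    (τ : TopologicalSpace (BF 𝓕)) (hT2 : @T2Space _ τ)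
    (hsc : ∀ a : BF 𝓕, @Continuous _ _ τ τ (fun x => BFmul hcl a x) ∧
        @Continuous _ _ τ τ (fun x => BFmul hcl x a)) :
    τ = ⊥ := by
  refine eq_bot_of_singletons_open fun p => ?_
  obtain ⟨C, hC⟩ := BF.exists_sInf_lt_mem_nhds hcl hne hind (fun a => (hsc a).1) p
  have hU : {x : BF 𝓕 | x.1 ≤ p.1 ∧ x.2.1 ≤ p.2.1 ∧ sInf x.2.2.1 < C} ∈ 𝓝 p :=
    Filter.inter_mem (BF.fst_le_mem_nhds hcl hne hind (fun a => (hsc a).1) p)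
      (Filter.inter_mem (BF.snd_le_mem_nhds hcl hne hind (fun a => (hsc a).2) p) hC)
  exact isOpen_singleton_of_finite_mem_nhds p hU (BF.finite_setOf_le_le_lt hne hind _ _ _)
end

section
/- Let 𝓕 be an ω-closed family of nonempty inductive subsets of ω and let S = B_ω^𝓕 ∪ {0} be B_ω^𝓕 with an adjoined zero, equipped with a Hausdorff locally compact shift-continuous topology in which 0 is not an isolated point. Then for every neighbourhood U of 0 in S, the set S \ U is finite. -/
/-- `B_ω^𝓕` with an adjoined zero; `none` plays the role of the zero `0`. -/
abbrev BF0 (𝓕 : Set (Set ℕ)) : Type := Option (BF 𝓕)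

/-- The multiplication of the semigroup `B_ω^𝓕` with an adjoined zero. -/
def BF0mul {𝓕 : Set (Set ℕ)} (h : OmegaClosed 𝓕) : BF0 𝓕 → BF0 𝓕 → BF0 𝓕
  | some a, some b => some (BFmul h a b)
  | _, _ => none

open Set Filter Topology

@[simp]
lemma mem_wShift {n x : ℕ} {F : Set ℕ} : x ∈ wShift n F ↔ x + n ∈ F := Iff.rfl

@[simp]
lemma wShift_zero (F : Set ℕ) : wShift 0 F = F := rfl

namespace InductiveSet

variable {F G : Set ℕ}

lemma mem_iff_sInf_le (hF : InductiveSet F) (hne : F.Nonempty) {x : ℕ} : x ∈ F ↔ sInf F ≤ x := by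
  refine ⟨fun hx => Nat.sInf_le hx, fun hx => ?_⟩
  obtain ⟨d, rfl⟩ := Nat.exists_eq_add_of_le hx
  induction d with
  | zero => exact Nat.sInf_mem hne
  | succ d ih => exact hF _ (ih (by omega))

lemma eq_of_sInf_eq (hF : InductiveSet F) (hFne : F.Nonempty) (hG : InductiveSet G)
    (hGne : G.Nonempty) (h : sInf F = sInf G) : F = G := by
  ext x; rw [hF.mem_iff_sInf_le hFne, hG.mem_iff_sInf_le hGne, h]

lemma subset_wShift (hF : InductiveSet F) (d : ℕ) : F ⊆ wShift d F := by
  intro x hx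
  induction d with
  | zero => exact hx
  | succ d ih => exact hF _ ih

end InductiveSet

variable {𝓕 : Set (Set ℕ)}

lemma exists_forall_subset_wShift (hne : ∀ F ∈ 𝓕, F.Nonempty) (hind : ∀ F ∈ 𝓕, InductiveSet F)
    (h𝓕 : 𝓕.Nonempty) : ∃ F₀ : {F : Set ℕ // F ∈ 𝓕}, ∀ G ∈ 𝓕, ∀ d, G ⊆ wShift d F₀.1 := by
  obtain ⟨F₀, hF₀, hmin⟩ := Nat.sInf_mem (h𝓕.image sInf)
  refine ⟨⟨F₀, hF₀⟩, fun G hG d x hx => (hind F₀ hF₀).subset_wShift d ?_⟩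
  rw [(hind F₀ hF₀).mem_iff_sInf_le (hne F₀ hF₀), hmin]
  exact (Nat.sInf_le (mem_image_of_mem sInf hG)).trans (Nat.sInf_le hx)

lemma finite_setOf_le_le_sInf_lt (hne : ∀ F ∈ 𝓕, F.Nonempty) (hind : ∀ F ∈ 𝓕, InductiveSet F)
    (i j t : ℕ) : {w : BF 𝓕 | w.1 ≤ i ∧ w.2.1 ≤ j ∧ sInf w.2.2.1 < t}.Finite := by
  have hinj : Function.Injective fun w : BF 𝓕 => (w.1, w.2.1, sInf w.2.2.1) := by
    rintro ⟨i, j, G⟩ ⟨i', j', G'⟩ h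
    simp only [Prod.mk.injEq] at h
    obtain ⟨rfl, rfl, hG⟩ := h
    rw [Subtype.ext ((hind _ G.2).eq_of_sInf_eq (hne _ G.2) (hind _ G'.2) (hne _ G'.2) hG)]
  exact ((finite_Iic i).prod ((finite_Iic j).prod (finite_Iio t))).preimage hinj.injOn

section Multiplication

variable (hcl : OmegaClosed 𝓕) {F₀ : {F : Set ℕ // F ∈ 𝓕}}
  (hF₀ : ∀ G ∈ 𝓕, ∀ d, G ⊆ wShift d F₀.1) (i j k : ℕ) (G : {F : Set ℕ // F ∈ 𝓕})
include hF₀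

lemma BFmul_shift_left : BFmul hcl (k, 0, F₀) (i, j, G) = (i + k, j, G) := by
  rw [BFmul, if_pos (Nat.zero_le i)]
  ext x <;> simp [inter_eq_right.mpr (hF₀ _ G.2 _)]
  omega

lemma BFmul_unshift_left (hk : k ≤ i) : BFmul hcl (0, k, F₀) (i, j, G) = (i - k, j, G) := by
  rw [BFmul, if_pos hk]
  ext x <;> simp [inter_eq_right.mpr (hF₀ _ G.2 _)]

lemma BFmul_shift_right : BFmul hcl (i, j, G) (0, k, F₀) = (i, j + k, G) := by
  rw [BFmul]
  split_ifs with h <;> dsimp only at h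
  · obtain rfl : j = 0 := by omega
    ext x <;> simp
    exact fun hx => hF₀ _ G.2 0 hx
  · ext x <;> simp [inter_eq_left.mpr (hF₀ _ G.2 _)]
    omega

lemma BFmul_unshift_right (hk : k ≤ j) : BFmul hcl (i, j, G) (k, 0, F₀) = (i, j - k, G) := by
  rw [BFmul]
  split_ifs with h <;> dsimp only at h
  · obtain rfl : j = k := by omega
    ext x <;> simp
    exact fun hx => hF₀ _ G.2 0 hx
  · ext x <;> simp [inter_eq_left.mpr (hF₀ _ G.2 _)]

lemma BFmul_idempotent_left_eq_self_iff : BFmul hcl (k, k, F₀) (i, j, G) = (i, j, G) ↔ k ≤ i := by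
  rw [BFmul]
  split_ifs with h <;> dsimp only at h
  · simp only [h, iff_true]
    ext x <;> simp [inter_eq_right.mpr (hF₀ _ G.2 _)]
    omega
  · simp only [h, iff_false, Prod.ext_iff]
    omega

lemma BFmul_idempotent_right_eq_self_iff : BFmul hcl (i, j, G) (k, k, F₀) = (i, j, G) ↔ k ≤ j := by
  rw [BFmul]
  split_ifs with h <;> dsimp only at h
  · rcases h.eq_or_lt with rfl | hlt
    · simp only [le_refl, iff_true]
      ext x <;> simp
      exact fun hx => hF₀ _ G.2 0 hx
    · simp only [Prod.ext_iff, not_le.mpr hlt, iff_false]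
      omega
  · simp only [le_of_not_ge h, iff_true]
    ext x <;> simp [inter_eq_left.mpr (hF₀ _ G.2 _)]
    omega

end Multiplication

section LevelChange

variable (hcl : OmegaClosed 𝓕) (i j : ℕ) (F G : {F : Set ℕ // F ∈ 𝓕})

lemma BFmul_level_right_eq_self_iff :
    BFmul hcl (i, j, G) (0, 0, F) = (i, j, G) ↔ G.1 ⊆ wShift j F.1 := by
  rw [BFmul]
  split_ifs with h <;> dsimp only at h
  · obtain rfl : j = 0 := by omega
    simp [Prod.ext_iff, Subtype.ext_iff]
  · simp [Prod.ext_iff, Subtype.ext_iff]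

lemma BFmul_level_left_of_subset (hGF : G.1 ⊆ F.1) : BFmul hcl (0, 0, G) (0, j, F) = (0, j, G) := by
  rw [BFmul, if_pos le_rfl]
  ext x <;> simp
  exact fun hx => hGF hx

lemma BFmul_level_of_sInf_lt (hG : InductiveSet G.1) (hGne : G.1.Nonempty) {d : ℕ}
    (hd : sInf G.1 < d) : BFmul hcl (0, d, F) (0, j, G) = (0, j + d, F) := by
  rw [BFmul, if_neg (by dsimp only; omega)]
  ext x <;> simp [hG.mem_iff_sInf_le hGne]
  omega

end LevelChange

section Grid

variable {ι : Type*}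

lemma exists_subset_Iic_prod_Iic_prod {E : Set (ℕ × ℕ × ι)} (hE : E.Finite) :
    ∃ N, ∃ Λ : Set ι, Λ.Finite ∧ E ⊆ Iic N ×ˢ Iic N ×ˢ Λ := by
  obtain ⟨N, hN⟩ := (hE.image fun e => max e.1 e.2.1).bddAbove
  refine ⟨N, _, hE.image fun e => e.2.2, fun e he => ?_⟩
  have := hN (mem_image_of_mem _ he)
  simp only [mem_prod, mem_Iic]
  exact ⟨by omega, by omega, mem_image_of_mem _ he⟩

lemma mk_notMem_Iic_prod_Iic_prod_of_le {N : ℕ} {Λ : Set ι} {i j j' : ℕ} {l : ι}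
    (h : (i, j, l) ∉ Iic N ×ˢ Iic N ×ˢ Λ) (hj : j ≤ j') : (i, j', l) ∉ Iic N ×ˢ Iic N ×ˢ Λ :=
  fun ⟨hi, hj', hl⟩ => h ⟨hi, hj.trans hj', hl⟩

lemma mk_notMem_Iic_prod_Iic_prod_of_lt {N : ℕ} {Λ : Set ι} {i j : ℕ} {l : ι} (hj : N < j) :
    (i, j, l) ∉ Iic N ×ˢ Iic N ×ˢ Λ :=
  fun ⟨_, hj', _⟩ => (not_le.mpr hj) hj'

lemma eventually_mk_zero_mem_of_stable {P : Set (ℕ × ℕ × ι)} {N : ℕ} {Λ : Set ι}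
    (hup : ∀ i j l, (i, j, l) ∈ P → (i, j, l) ∉ Iic N ×ˢ Iic N ×ˢ Λ → (i, j + 1, l) ∈ P)
    (hleft : ∀ i j l, N < j → (i + 1, j, l) ∈ P → (i, j, l) ∈ P)
    {i j : ℕ} {l : ι} (hp : (i, j, l) ∈ P) (hpΛ : (i, j, l) ∉ Iic N ×ˢ Iic N ×ˢ Λ) :
    ∀ᶠ J in atTop, (0, J, l) ∈ P := by
  have hcol : ∀ J, j ≤ J → (i, J, l) ∈ P ∧ (i, J, l) ∉ Iic N ×ˢ Iic N ×ˢ Λ := by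
    refine Nat.le_induction ⟨hp, hpΛ⟩ fun J _ ⟨hJ, hJΛ⟩ => ⟨hup _ _ _ hJ hJΛ, ?_⟩
    exact mk_notMem_Iic_prod_Iic_prod_of_le hJΛ J.le_succ
  have hrow : ∀ J, N < J → ∀ m, (m, J, l) ∈ P → (0, J, l) ∈ P := fun J hJ m => by
    induction m with
    | zero => exact id
    | succ m ih => exact fun h => ih (hleft m J l hJ h)
  filter_upwards [eventually_ge_atTop (max j (N + 1))] with J hJ
  exact hrow J (by omega) i (hcol J (by omega)).1

lemma eventually_mk_zero_mem_of_map {Y : Set (ℕ × ℕ × ι)} {f : ℕ × ℕ × ι → ℕ × ℕ × ι}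
    (hf : {y | y ∈ Y ∧ f y ∉ Y}.Finite) {l l' : ι} {d : ℕ}
    (hfl : ∀ J, f (0, J, l) = (0, J + d, l')) (h : ∀ᶠ J in atTop, (0, J, l) ∈ Y) :
    ∀ᶠ J in atTop, (0, J, l') ∈ Y := by
  have hgood : ∀ᶠ J in atTop, ((0 : ℕ), J, l) ∉ {y | y ∈ Y ∧ f y ∉ Y} := by
    rw [← Nat.cofinite_eq_atTop]
    refine (hf.preimage (f := fun J => ((0 : ℕ), J, l)) ?_).eventually_cofinite_notMem
    intro a _ b _ hab
    simpa using hab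
  obtain ⟨J₀, hJ₀⟩ := eventually_atTop.mp (h.and hgood)
  refine eventually_atTop.mpr ⟨J₀ + d, fun J hJ => ?_⟩
  obtain ⟨hY, hgood⟩ := hJ₀ (J - d) (by omega)
  have := hfl (J - d)
  rw [Nat.sub_add_cancel (by omega)] at this
  by_contra hJ
  exact hgood ⟨hY, this ▸ hJ⟩

end Grid

def AlmostInvariant (hcl : OmegaClosed 𝓕) (Y : Set (BF 𝓕)) : Prop :=
  ∀ a, {y | y ∈ Y ∧ BFmul hcl a y ∉ Y}.Finite ∧ {y | y ∈ Y ∧ BFmul hcl y a ∉ Y}.Finite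

theorem AlmostInvariant.finite_compl {hcl : OmegaClosed 𝓕} (hne : ∀ F ∈ 𝓕, F.Nonempty)
    (hind : ∀ F ∈ 𝓕, InductiveSet F) {Y : Set (BF 𝓕)} (hY : AlmostInvariant hcl Y)
    (hYinf : Y.Infinite) : Yᶜ.Finite := by
  by_contra hX
  obtain ⟨F₀, hF₀⟩ := exists_forall_subset_wShift hne hind ⟨_, hYinf.nonempty.some.2.2.2⟩
  set E := {y | y ∈ Y ∧ BFmul hcl (0, 1, F₀) y ∉ Y} ∪ {y | y ∈ Y ∧ BFmul hcl y (0, 1, F₀) ∉ Y} ∪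
    {y | y ∈ Y ∧ BFmul hcl (1, 0, F₀) y ∉ Y} ∪ {y | y ∈ Y ∧ BFmul hcl y (1, 0, F₀) ∉ Y}
  have hE : E.Finite :=
    (((hY _).1.union (hY _).2).union (hY _).1).union (hY _).2
  obtain ⟨N, Λ, hΛ, hEΛ⟩ := exists_subset_Iic_prod_Iic_prod hE
  have hgood : ∀ y ∈ Y, y ∉ Iic N ×ˢ Iic N ×ˢ Λ →
      BFmul hcl (0, 1, F₀) y ∈ Y ∧ BFmul hcl y (0, 1, F₀) ∈ Y ∧
        BFmul hcl (1, 0, F₀) y ∈ Y ∧ BFmul hcl y (1, 0, F₀) ∈ Y := by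
    intro y hy hybox
    have hyE : y ∉ E := fun h => hybox (hEΛ h)
    simp only [E, mem_union, not_or] at hyE
    exact ⟨not_not.mp fun h => hyE.1.1.1 ⟨hy, h⟩, not_not.mp fun h => hyE.1.1.2 ⟨hy, h⟩,
      not_not.mp fun h => hyE.1.2 ⟨hy, h⟩, not_not.mp fun h => hyE.2 ⟨hy, h⟩⟩
  have hbox : (Iic N ×ˢ Iic N ×ˢ Λ).Finite := (finite_Iic N).prod ((finite_Iic N).prod hΛ)
  obtain ⟨⟨i, j, G⟩, hxY, hxbox⟩ := (Set.Infinite.sdiff hX hbox).nonempty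
  obtain ⟨⟨i', j', H⟩, hyY, hybox⟩ := (hYinf.sdiff hbox).nonempty
  have hXrow : ∀ᶠ J in atTop, (0, J, G) ∈ Yᶜ := by
    refine eventually_mk_zero_mem_of_stable (P := Yᶜ) (fun i j l hX hbox hY => hX ?_)
      (fun i j l hj hX hY => hX ?_) hxY hxbox
    · have := (hgood _ hY (mk_notMem_Iic_prod_Iic_prod_of_le hbox j.le_succ)).2.2.2
      rwa [BFmul_unshift_right hcl hF₀ _ _ _ _ (by omega), Nat.add_sub_cancel] at this
    · have := (hgood _ hY (mk_notMem_Iic_prod_Iic_prod_of_lt hj)).2.2.1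
      rwa [BFmul_shift_left hcl hF₀] at this
  have hYrow : ∀ᶠ J in atTop, (0, J, H) ∈ Y := by
    refine eventually_mk_zero_mem_of_stable (fun i j l hY hbox => ?_) (fun i j l hj hY => ?_)
      hyY hybox
    · have := (hgood _ hY hbox).2.1
      rwa [BFmul_shift_right hcl hF₀] at this
    · have := (hgood _ hY (mk_notMem_Iic_prod_Iic_prod_of_lt hj)).1
      rwa [BFmul_unshift_left hcl hF₀ _ _ _ _ (by omega), Nat.add_sub_cancel] at this
  have hYtop : ∀ᶠ J in atTop, (0, J, F₀) ∈ Y :=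
    eventually_mk_zero_mem_of_map (hY (0, sInf H.1 + 1, F₀)).1
      (fun J => BFmul_level_of_sInf_lt hcl J F₀ H (hind _ H.2) (hne _ H.2) (Nat.lt_succ_self _))
      hYrow
  have hYG : ∀ᶠ J in atTop, (0, J, G) ∈ Y :=
    eventually_mk_zero_mem_of_map (d := 0) (hY (0, 0, G)).1
      (fun J => BFmul_level_left_of_subset hcl J F₀ G (hF₀ _ G.2 0)) hYtop
  obtain ⟨J, hJX, hJY⟩ := (hXrow.and hYG).exists
  exact hJX hJY

section IsolatedPoints

variable {α : Type*} [TopologicalSpace α] {z : α} (hiso : ∀ x, x ≠ z → IsOpen {x})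
include hiso

lemma IsCompact.finite_of_isOpen_singleton {s : Set α} (hs : IsCompact s) (hz : z ∉ s) :
    s.Finite := by
  obtain ⟨t, -, hst⟩ := hs.elim_nhds_subcover (fun x => {x})
    fun x hx => (hiso x (ne_of_mem_of_not_mem hx hz)).mem_nhds rfl
  exact t.finite_toSet.subset fun x hx => by simpa using hst hx

lemma IsCompact.finite_diff_of_isOpen_singleton {K W : Set α} (hK : IsCompact K) (hW : W ∈ 𝓝 z) :
    (K \ W).Finite :=
  ((hK.diff isOpen_interior).finite_of_isOpen_singleton hiso
    fun h => h.2 (mem_interior_iff_mem_nhds.mpr hW)).subset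
    (sdiff_subset_sdiff_right interior_subset)

lemma IsCompact.finite_setOf_map_notMem {K : Set α} (hK : IsCompact K) (hKz : K ∈ 𝓝 z)
    {f : α → α} (hf : ContinuousAt f z) (hfz : f z = z) : {x | x ∈ K ∧ f x ∉ K}.Finite :=
  hK.finite_diff_of_isOpen_singleton hiso (hf.preimage_mem_nhds (by rwa [hfz]))

end IsolatedPoints

lemma Option.infinite_setOf_some_mem {α : Type*} [TopologicalSpace (Option α)] [T1Space (Option α)]
    (hni : ¬ IsOpen {(none : Option α)}) {K : Set (Option α)} (hK : K ∈ 𝓝 none) :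
    {y : α | some y ∈ K}.Infinite := by
  intro hfin
  refine hni (isOpen_iff_mem_nhds.mpr fun _ hx => ?_)
  rw [mem_singleton_iff.mp hx]
  refine mem_of_superset (inter_mem hK ((hfin.image some).isClosed.compl_mem_nhds (by simp))) ?_
  rintro (_ | y) ⟨hyK, hy⟩
  · rfl
  · exact absurd ⟨y, hyK, rfl⟩ hy

section ShiftContinuous

variable {hcl : OmegaClosed 𝓕} [TopologicalSpace (BF0 𝓕)]
  (hsc : ∀ a : BF0 𝓕, Continuous (fun x => BF0mul hcl a x) ∧ Continuous (fun x => BF0mul hcl x a))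
include hsc

lemma exists_eventually_sInf_lt [T2Space (BF0 𝓕)] (hne : ∀ F ∈ 𝓕, F.Nonempty)
    (hind : ∀ F ∈ 𝓕, InductiveSet F) (s : BF 𝓕) :
    ∃ t, ∀ᶠ x in 𝓝 (some s), ∀ w : BF 𝓕, x = some w → sInf w.2.2.1 < t := by
  obtain ⟨i, j, G⟩ := s
  by_cases hT : ∃ T ∈ 𝓕, sInf G.1 + j < sInf T
  · obtain ⟨T, hT, hGT⟩ := hT
    have hTmem {x : ℕ} : x ∈ T ↔ sInf T ≤ x := (hind T hT).mem_iff_sInf_le (hne T hT)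
    refine ⟨sInf T, (((hsc (some (0, 0, ⟨T, hT⟩))).2.continuousAt.ne_iff_eventually_ne
      continuousAt_id).mp ?_).mono ?_⟩
    · simp only [BF0mul, id, ne_eq, Option.some.injEq, BFmul_level_right_eq_self_iff]
      intro hsub
      have := hTmem.mp (hsub (Nat.sInf_mem (hne _ G.2)))
      omega
    · rintro _ hx ⟨i', j', G'⟩ rfl
      simp only [BF0mul, id, ne_eq, Option.some.injEq, BFmul_level_right_eq_self_iff] at hx
      obtain ⟨y, hy, hyT⟩ := not_subset.mp hx
      have := Nat.sInf_le hy
      rw [mem_wShift, hTmem] at hyT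
      show sInf G'.1 < sInf T
      omega
  · simp only [not_exists, not_and, not_lt] at hT
    exact ⟨sInf G.1 + j + 1, .of_forall fun _ w _ => Nat.lt_succ_of_le (hT _ w.2.2.2)⟩

lemma isOpen_singleton_some [T2Space (BF0 𝓕)] (hne : ∀ F ∈ 𝓕, F.Nonempty)
    (hind : ∀ F ∈ 𝓕, InductiveSet F) (s : BF 𝓕) : IsOpen {some s} := by
  obtain ⟨i, j, G⟩ := s
  obtain ⟨F₀, hF₀⟩ := exists_forall_subset_wShift hne hind ⟨_, G.2⟩
  obtain ⟨t, ht⟩ := exists_eventually_sInf_lt hsc hne hind (i, j, G)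
  have hleft : ∀ᶠ x in 𝓝 (some (i, j, G)), BF0mul hcl (some (i + 1, i + 1, F₀)) x ≠ x :=
    ((hsc _).1.continuousAt.ne_iff_eventually_ne continuousAt_id).mp
      (by simp [BF0mul, BFmul_idempotent_left_eq_self_iff hcl hF₀])
  have hright : ∀ᶠ x in 𝓝 (some (i, j, G)), BF0mul hcl x (some (j + 1, j + 1, F₀)) ≠ x :=
    ((hsc _).2.continuousAt.ne_iff_eventually_ne continuousAt_id).mp
      (by simp [BF0mul, BFmul_idempotent_right_eq_self_iff hcl hF₀])
  have hfin : ∀ᶠ x in 𝓝 (some (i, j, G)),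
      x ∉ some '' ({w | w.1 ≤ i ∧ w.2.1 ≤ j ∧ sInf w.2.2.1 < t} \ {(i, j, G)}) :=
    (((finite_setOf_le_le_sInf_lt hne hind i j t).sdiff).image some).isClosed.compl_mem_nhds
      (by simp)
  refine isOpen_iff_mem_nhds.mpr fun _ hx => ?_
  rw [mem_singleton_iff.mp hx]
  filter_upwards [hleft, hright, ht, hfin] with x hl hr hlt hx
  rcases x with _ | ⟨i', j', G'⟩
  · exact absurd rfl hl
  · simp only [BF0mul, ne_eq, Option.some.injEq, BFmul_idempotent_left_eq_self_iff hcl hF₀,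
      BFmul_idempotent_right_eq_self_iff hcl hF₀, not_le] at hl hr
    by_contra hws
    refine hx ⟨_, ⟨⟨?_, ?_, hlt _ rfl⟩, fun h => hws (congrArg some h)⟩, rfl⟩ <;> dsimp only <;> omega

lemma almostInvariant_of_isCompact (hiso : ∀ x : BF0 𝓕, x ≠ none → IsOpen {x})
    {K : Set (BF0 𝓕)} (hK : IsCompact K) (hKz : K ∈ 𝓝 none) : AlmostInvariant hcl {y | some y ∈ K} := fun a =>
  ⟨(hK.finite_setOf_map_notMem hiso hKz (hsc (some a)).1.continuousAt rfl).preimage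
      (Option.some_injective _).injOn,
    (hK.finite_setOf_map_notMem hiso hKz (hsc (some a)).2.continuousAt rfl).preimage
      (Option.some_injective _).injOn⟩

end ShiftContinuous

/-- Lemma 3.5: if `S = B_ω^𝓕 ∪ {0}` carries a Hausdorff locally compact
shift-continuous topology with nonisolated zero, then for every neighbourhood `U`
of the zero the set `S \ U` is finite. -/
theorem statement9 (𝓕 : Set (Set ℕ)) (hcl : OmegaClosed 𝓕)
    (hne : ∀ F ∈ 𝓕, F.Nonempty) (hind : ∀ F ∈ 𝓕, InductiveSet F)
    (τ : TopologicalSpace (BF0 𝓕)) (hT2 : @T2Space _ τ)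
    (hlc : @LocallyCompactSpace _ τ)
    (hsc : ∀ a : BF0 𝓕, @Continuous _ _ τ τ (fun x => BF0mul hcl a x) ∧
        @Continuous _ _ τ τ (fun x => BF0mul hcl x a))
    (hni : ¬ @IsOpen _ τ {(none : BF0 𝓕)})
    (U : Set (BF0 𝓕)) (hU : U ∈ @nhds _ τ none) :
    Uᶜ.Finite := by
  have hiso : ∀ x : BF0 𝓕, x ≠ none → IsOpen {x} := by
    rintro (_ | s) h
    · exact absurd rfl h
    · exact isOpen_singleton_some hsc hne hind s
  obtain ⟨K, hK, hKz⟩ := exists_compact_mem_nhds (none : BF0 𝓕)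
  have hKc : Kᶜ.Finite := by
    refine (((almostInvariant_of_isCompact hsc hiso hK hKz).finite_compl hne hind
      (Option.infinite_setOf_some_mem hni hKz)).image some).subset ?_
    rintro (_ | y) hy
    · exact absurd (mem_of_mem_nhds hKz) hy
    · exact ⟨y, hy, rfl⟩
  refine ((hK.finite_diff_of_isOpen_singleton hiso hU).union hKc).subset fun x hx => ?_
  by_cases hxK : x ∈ K
  exacts [Or.inl ⟨hxK, hx⟩, Or.inr hxK]
end
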